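/- arXiv:math/0409206 — 7 statements merged into one kernel-verified Lean document; each statement's English description precedes it below -/
import Mathlib

section
/- The map Ψ : V_W ⊗ V_W → V_W ⊗ V_W defined by Ψ([α] ⊗ [β]) = [s_α β] ⊗ [α] is a well-defined invertible linear map satisfying the braid equation Ψ₁₂Ψ₂₃Ψ₁₂ = Ψ₂₃Ψ₁₂Ψ₂₃ on V_W^{⊗3}. -/
open TensorProduct

/-- Let `R = R⁺ ⊔ (−R⁺)` be the root system of a finite Coxeter
group, `σ α` the reflection in the root `α` (an involution with `σ α α = −α`,
`σ (−α) = σ α`, preserving `R`, and satisfying `σ (σ α β) = σ α ∘ σ β ∘ σ α`), and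
let `V = V_W` be the space spanned by `[α] = br α`, `α ∈ R`, with `[−α] = −[α]` and
`{[α] : α ∈ R⁺}` a basis.  Then the assignment `Ψ([α] ⊗ [β]) = [σ α β] ⊗ [α]` is a
well-defined invertible linear map `V ⊗ V → V ⊗ V` satisfying the braid equation
`Ψ₁₂ Ψ₂₃ Ψ₁₂ = Ψ₂₃ Ψ₁₂ Ψ₂₃` on `V ⊗ V ⊗ V`. -/
theorem VW_braiding_exists_and_braid_equation
    {𝔥 : Type*} [AddCommGroup 𝔥] [Module ℂ 𝔥]
    (Rp : Set 𝔥) (R : Set 𝔥) (hR : R = Rp ∪ (Neg.neg '' Rp))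
    (σ : 𝔥 → (𝔥 ≃ₗ[ℂ] 𝔥))
    (hσR : ∀ α ∈ R, ∀ β ∈ R, σ α β ∈ R)
    (hσself : ∀ α ∈ R, σ α α = -α)
    (hσneg : ∀ α ∈ R, σ (-α) = σ α)
    (hσinv : ∀ α ∈ R, ∀ x : 𝔥, σ α (σ α x) = x)
    (hσconj : ∀ α ∈ R, ∀ β ∈ R, ∀ x : 𝔥, σ (σ α β) x = σ α (σ β (σ α x)))
    {V : Type*} [AddCommGroup V] [Module ℂ V]
    (br : 𝔥 → V)
    (hbrneg : ∀ α ∈ R, br (-α) = -br α)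
    (bV : Module.Basis Rp ℂ V) (hbV : ∀ a : Rp, bV a = br (a : 𝔥)) :
    ∃ Ψ : (V ⊗[ℂ] V) ≃ₗ[ℂ] (V ⊗[ℂ] V),
      (∀ α ∈ R, ∀ β ∈ R, Ψ (br α ⊗ₜ[ℂ] br β) = br (σ α β) ⊗ₜ[ℂ] br α) ∧
      (let Ψ₁₂ : ((V ⊗[ℂ] V) ⊗[ℂ] V) ≃ₗ[ℂ] ((V ⊗[ℂ] V) ⊗[ℂ] V) :=
          TensorProduct.congr Ψ (LinearEquiv.refl ℂ V)
       let Ψ₂₃ : ((V ⊗[ℂ] V) ⊗[ℂ] V) ≃ₗ[ℂ] ((V ⊗[ℂ] V) ⊗[ℂ] V) :=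
          (TensorProduct.assoc ℂ V V V) ≪≫ₗ
            TensorProduct.congr (LinearEquiv.refl ℂ V) Ψ ≪≫ₗ
            (TensorProduct.assoc ℂ V V V).symm
       Ψ₁₂ ≪≫ₗ Ψ₂₃ ≪≫ₗ Ψ₁₂ = Ψ₂₃ ≪≫ₗ Ψ₁₂ ≪≫ₗ Ψ₂₃) := by

  classical
  have hRpR : ∀ a ∈ Rp, a ∈ R := fun a ha => by rw [hR]; exact Or.inl ha
  have hmem : ∀ α ∈ R, α ∈ Rp ∨ ∃ a ∈ Rp, α = -a := by
    intro α hα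
    rw [hR] at hα
    rcases hα with h | ⟨a, ha, rfl⟩
    · exact Or.inl h
    · exact Or.inr ⟨a, ha, rfl⟩
  set B := bV.tensorProduct bV with hB
  set Ψ₀ : V ⊗[ℂ] V →ₗ[ℂ] V ⊗[ℂ] V :=
    B.constr ℂ (fun p => br (σ (p.1 : 𝔥) (p.2 : 𝔥)) ⊗ₜ[ℂ] br (p.1 : 𝔥)) with hΨ₀def
  set Φ₀ : V ⊗[ℂ] V →ₗ[ℂ] V ⊗[ℂ] V :=
    B.constr ℂ (fun p => br (p.2 : 𝔥) ⊗ₜ[ℂ] br (σ (p.2 : 𝔥) (p.1 : 𝔥))) with hΦ₀def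
  have hBapply : ∀ a b : Rp, B (a, b) = br (a : 𝔥) ⊗ₜ[ℂ] br (b : 𝔥) := by
    intro a b
    rw [hB, Module.Basis.tensorProduct_apply, hbV, hbV]
  have hΨbasis : ∀ a b : Rp,
      Ψ₀ (br (a : 𝔥) ⊗ₜ[ℂ] br (b : 𝔥)) = br (σ (a : 𝔥) (b : 𝔥)) ⊗ₜ[ℂ] br (a : 𝔥) := by
    intro a b
    rw [← hBapply, hΨ₀def, Module.Basis.constr_basis]
  have hΦbasis : ∀ a b : Rp,
      Φ₀ (br (a : 𝔥) ⊗ₜ[ℂ] br (b : 𝔥)) = br (b : 𝔥) ⊗ₜ[ℂ] br (σ (b : 𝔥) (a : 𝔥)) := by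
    intro a b
    rw [← hBapply, hΦ₀def, Module.Basis.constr_basis]
  have hΨ : ∀ α ∈ R, ∀ β ∈ R, Ψ₀ (br α ⊗ₜ[ℂ] br β) = br (σ α β) ⊗ₜ[ℂ] br α := by
    intro α hα β hβ
    rcases hmem α hα with ha | ⟨a, ha, rfl⟩
    · rcases hmem β hβ with hb | ⟨b, hb, rfl⟩
      · exact hΨbasis ⟨α, ha⟩ ⟨β, hb⟩
      · have hσab : σ α b ∈ R := hσR α (hRpR α ha) b (hRpR b hb)
        rw [hbrneg b (hRpR b hb), TensorProduct.tmul_neg, map_neg,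
          hΨbasis ⟨α, ha⟩ ⟨b, hb⟩, map_neg (σ α), hbrneg _ hσab,
          TensorProduct.neg_tmul]
    · rcases hmem β hβ with hb | ⟨b, hb, rfl⟩
      · rw [hbrneg a (hRpR a ha), hσneg a (hRpR a ha), TensorProduct.neg_tmul,
          map_neg, hΨbasis ⟨a, ha⟩ ⟨β, hb⟩, TensorProduct.tmul_neg]
      · have hσab : σ a b ∈ R := hσR a (hRpR a ha) b (hRpR b hb)
        rw [hbrneg a (hRpR a ha), hbrneg b (hRpR b hb), hσneg a (hRpR a ha),
          TensorProduct.neg_tmul, TensorProduct.tmul_neg, map_neg, map_neg,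
          neg_neg, hΨbasis ⟨a, ha⟩ ⟨b, hb⟩, map_neg (σ a), hbrneg _ hσab,
          TensorProduct.neg_tmul, TensorProduct.tmul_neg, neg_neg]
  have hΦ : ∀ α ∈ R, ∀ β ∈ R, Φ₀ (br α ⊗ₜ[ℂ] br β) = br β ⊗ₜ[ℂ] br (σ β α) := by
    intro α hα β hβ
    rcases hmem α hα with ha | ⟨a, ha, rfl⟩
    · rcases hmem β hβ with hb | ⟨b, hb, rfl⟩
      · exact hΦbasis ⟨α, ha⟩ ⟨β, hb⟩
      · have hσba : σ b α ∈ R := hσR b (hRpR b hb) α (hRpR α ha)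
        rw [hbrneg b (hRpR b hb), hσneg b (hRpR b hb), TensorProduct.tmul_neg,
          map_neg, hΦbasis ⟨α, ha⟩ ⟨b, hb⟩, TensorProduct.neg_tmul]
    · rcases hmem β hβ with hb | ⟨b, hb, rfl⟩
      · have hσba : σ β a ∈ R := hσR β (hRpR β hb) a (hRpR a ha)
        rw [hbrneg a (hRpR a ha), TensorProduct.neg_tmul, map_neg,
          hΦbasis ⟨a, ha⟩ ⟨β, hb⟩, map_neg (σ β), hbrneg _ hσba,
          TensorProduct.tmul_neg]
      · have hσba : σ b a ∈ R := hσR b (hRpR b hb) a (hRpR a ha)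
        rw [hbrneg a (hRpR a ha), hbrneg b (hRpR b hb), hσneg b (hRpR b hb),
          TensorProduct.neg_tmul, TensorProduct.tmul_neg, map_neg, map_neg,
          neg_neg, hΦbasis ⟨a, ha⟩ ⟨b, hb⟩, map_neg (σ b), hbrneg _ hσba,
          TensorProduct.neg_tmul, TensorProduct.tmul_neg, neg_neg]
  have hΦΨ : Φ₀.comp Ψ₀ = LinearMap.id := by
    apply B.ext
    rintro ⟨a, b⟩
    have haR := hRpR a a.2
    have hbR := hRpR b b.2
    have hσab : σ (a : 𝔥) (b : 𝔥) ∈ R := hσR _ haR _ hbR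
    rw [hBapply a b, LinearMap.comp_apply, LinearMap.id_apply,
      hΨ _ haR _ hbR, hΦ _ hσab _ haR, hσinv _ haR]
  have hΨΦ : Ψ₀.comp Φ₀ = LinearMap.id := by
    apply B.ext
    rintro ⟨a, b⟩
    have haR := hRpR a a.2
    have hbR := hRpR b b.2
    have hσba : σ (b : 𝔥) (a : 𝔥) ∈ R := hσR _ hbR _ haR
    rw [hBapply a b, LinearMap.comp_apply, LinearMap.id_apply,
      hΦ _ haR _ hbR, hΨ _ hbR _ hσba, hσinv _ hbR]
  set Ψ : (V ⊗[ℂ] V) ≃ₗ[ℂ] (V ⊗[ℂ] V) := LinearEquiv.ofLinear Ψ₀ Φ₀ hΨΦ hΦΨ with hΨdef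
  have hΨ' : ∀ α ∈ R, ∀ β ∈ R, Ψ (br α ⊗ₜ[ℂ] br β) = br (σ α β) ⊗ₜ[ℂ] br α := by
    intro α hα β hβ
    rw [hΨdef, LinearEquiv.ofLinear_apply]
    exact hΨ α hα β hβ
  refine ⟨Ψ, hΨ', ?_⟩
  show (TensorProduct.congr Ψ (LinearEquiv.refl ℂ V)) ≪≫ₗ
      ((TensorProduct.assoc ℂ V V V) ≪≫ₗ
        TensorProduct.congr (LinearEquiv.refl ℂ V) Ψ ≪≫ₗ
        (TensorProduct.assoc ℂ V V V).symm) ≪≫ₗ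
      (TensorProduct.congr Ψ (LinearEquiv.refl ℂ V)) =
    ((TensorProduct.assoc ℂ V V V) ≪≫ₗ
        TensorProduct.congr (LinearEquiv.refl ℂ V) Ψ ≪≫ₗ
        (TensorProduct.assoc ℂ V V V).symm) ≪≫ₗ
      (TensorProduct.congr Ψ (LinearEquiv.refl ℂ V)) ≪≫ₗ
      ((TensorProduct.assoc ℂ V V V) ≪≫ₗ
        TensorProduct.congr (LinearEquiv.refl ℂ V) Ψ ≪≫ₗ
        (TensorProduct.assoc ℂ V V V).symm)
  have h12 : ∀ α ∈ R, ∀ β ∈ R, ∀ z : V,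
      (TensorProduct.congr Ψ (LinearEquiv.refl ℂ V)) ((br α ⊗ₜ[ℂ] br β) ⊗ₜ[ℂ] z) =
        (br (σ α β) ⊗ₜ[ℂ] br α) ⊗ₜ[ℂ] z := by
    intro α hα β hβ z
    rw [TensorProduct.congr_tmul, hΨ' α hα β hβ, LinearEquiv.refl_apply]
  have h23 : ∀ x : V, ∀ β ∈ R, ∀ γ ∈ R,
      (TensorProduct.assoc ℂ V V V).symm
        ((TensorProduct.congr (LinearEquiv.refl ℂ V) Ψ)
          ((TensorProduct.assoc ℂ V V V) ((x ⊗ₜ[ℂ] br β) ⊗ₜ[ℂ] br γ))) =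
        (x ⊗ₜ[ℂ] br (σ β γ)) ⊗ₜ[ℂ] br β := by
    intro x β hβ γ hγ
    rw [TensorProduct.assoc_tmul, TensorProduct.congr_tmul, LinearEquiv.refl_apply,
      hΨ' β hβ γ hγ, TensorProduct.assoc_symm_tmul]
  apply LinearEquiv.toLinearMap_injective
  apply (B.tensorProduct bV).ext
  rintro ⟨⟨a, b⟩, c⟩
  have haR := hRpR a a.2
  have hbR := hRpR b b.2
  have hcR := hRpR c c.2
  have hab : σ (a : 𝔥) (b : 𝔥) ∈ R := hσR _ haR _ hbR
  have hac : σ (a : 𝔥) (c : 𝔥) ∈ R := hσR _ haR _ hcR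
  have hbc : σ (b : 𝔥) (c : 𝔥) ∈ R := hσR _ hbR _ hcR
  have habc : σ (a : 𝔥) (σ (b : 𝔥) (c : 𝔥)) ∈ R := hσR _ haR _ hbc
  have hBa : (B.tensorProduct bV) ((a, b), c) = (br (a : 𝔥) ⊗ₜ[ℂ] br (b : 𝔥)) ⊗ₜ[ℂ] br (c : 𝔥) := by
    rw [Module.Basis.tensorProduct_apply, hBapply, hbV]
  rw [LinearEquiv.coe_coe, LinearEquiv.coe_coe, hBa]
  simp only [LinearEquiv.trans_apply]
  rw [h12 _ haR _ hbR, h23 _ _ haR _ hcR, h12 _ hab _ hac,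
    h23 _ _ hbR _ hcR, h12 _ haR _ hbc, h23 _ _ haR _ hbR]
  have key : σ (σ (a : 𝔥) (b : 𝔥)) (σ (a : 𝔥) (c : 𝔥)) = σ (a : 𝔥) (σ (b : 𝔥) (c : 𝔥)) := by
    rw [hσconj _ haR _ hbR, hσinv _ haR]
  rw [key]
end

section
/- Every W-module homomorphism μ : 𝔥 → V_W is of the form μ(x) = Σ_{α∈R} c_α (x,α)[α], where α ↦ c_α is a W-invariant scalar function on the root system R. -/
open scoped Classical

/-- Let `W` be a finite Coxeter group with reflection
representation `𝔥` (with `W`-invariant form `Bh`, normalized so `(α,α) = 1` for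
roots), root system `R = R⁺ ⊔ (−R⁺)`, reflections `s α ∈ W` acting by
`x ↦ x − 2(x,α)α`, and `V_W` the Yetter–Drinfeld module spanned by `[α] = br α`,
`α ∈ R`, with `[−α] = −[α]` and `W`-action `ρ w [α] = [w α]`.  Then every `W`-module
homomorphism `μ : 𝔥 → V_W` is of the form `μ(x) = Σ_{α ∈ R} c_α (x,α) [α]`, where
`α ↦ c_α` is a `W`-invariant scalar function on `R`. -/
theorem hom_h_to_VW_classification
    {𝔥 : Type*} [AddCommGroup 𝔥] [Module ℂ 𝔥]
    {W : Type*} [Group W] [Finite W]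
    (φ : W →* (𝔥 ≃ₗ[ℂ] 𝔥))
    (Bh : 𝔥 →ₗ[ℂ] 𝔥 →ₗ[ℂ] ℂ)
    (hBhsymm : ∀ x y, Bh x y = Bh y x)
    (hBhW : ∀ (w : W) (x y : 𝔥), Bh (φ w x) (φ w y) = Bh x y)
    (Rp R : Finset 𝔥) (hR : R = Rp ∪ Rp.image Neg.neg)
    (hdisj : Disjoint Rp (Rp.image Neg.neg))
    (hWR : ∀ (w : W), ∀ α ∈ R, φ w α ∈ R)
    (hnorm : ∀ α ∈ R, Bh α α = 1)
    (s : 𝔥 → W)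
    (hrefl : ∀ α ∈ R, ∀ x : 𝔥, φ (s α) x = x - (2 * Bh x α) • α)
    {V : Type*} [AddCommGroup V] [Module ℂ V]
    (br : 𝔥 → V)
    (hbrneg : ∀ α ∈ R, br (-α) = -br α)
    (bV : Module.Basis Rp ℂ V) (hbV : ∀ a : Rp, bV a = br (a : 𝔥))
    (ρ : W →* (V ≃ₗ[ℂ] V))
    (hρ : ∀ (w : W), ∀ α ∈ R, ρ w (br α) = br (φ w α))
    (μ : 𝔥 →ₗ[ℂ] V)
    (hμ : ∀ (w : W) (x : 𝔥), μ (φ w x) = ρ w (μ x)) :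
    ∃ c : 𝔥 → ℂ,
      (∀ (w : W), ∀ α ∈ R, c (φ w α) = c α) ∧
      (∀ x : 𝔥, μ x = ∑ α ∈ R, (c α * Bh x α) • br α) := by
  classical
  have hRpR : ∀ β ∈ Rp, β ∈ R := fun β hβ => by
    rw [hR]; exact Finset.mem_union_left _ hβ
  have hnegRp : ∀ β ∈ Rp, -β ∉ Rp := by
    intro β hβ h
    exact Finset.disjoint_left.1 hdisj h (Finset.mem_image_of_mem _ hβ)
  -- coordinates of `br δ` for `δ ∈ R`
  have repr_br : ∀ δ ∈ R, ∀ b : Rp, bV.repr (br δ) b =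
      (if δ = (b : 𝔥) then 1 else if δ = -(b : 𝔥) then -1 else 0) := by
    intro δ hδ b
    rw [hR] at hδ
    rcases Finset.mem_union.1 hδ with h | h
    · rw [show br δ = bV ⟨δ, h⟩ from (hbV ⟨δ, h⟩).symm, bV.repr_self,
        Finsupp.single_apply]
      by_cases he : δ = (b : 𝔥)
      · rw [if_pos (Subtype.ext he), if_pos he]
      · have hne : δ ≠ -(b : 𝔥) := fun hc =>
          hnegRp δ h (by rw [hc, neg_neg]; exact b.2)
        rw [if_neg (fun hc => he (Subtype.ext_iff.1 hc)), if_neg he, if_neg hne]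
    · rcases Finset.mem_image.1 h with ⟨ε, hε, rfl⟩
      rw [hbrneg ε (hRpR ε hε), show br ε = bV ⟨ε, hε⟩ from (hbV ⟨ε, hε⟩).symm,
        map_neg, Finsupp.neg_apply, bV.repr_self, Finsupp.single_apply]
      have h1 : -ε ≠ (b : 𝔥) := fun hc => hnegRp ε hε (hc ▸ b.2)
      by_cases h2 : ε = (b : 𝔥)
      · rw [if_pos (Subtype.ext h2), if_neg h1, if_pos (by rw [h2])]
      · rw [if_neg (fun hc => h2 (Subtype.ext_iff.1 hc)), if_neg h1,
          if_neg (fun hc => h2 (neg_injective hc))]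
        simp
  -- the key vanishing lemma
  have hA : ∀ b : Rp, ∀ x : 𝔥, Bh x (b : 𝔥) = 0 → bV.repr (μ x) b = 0 := by
    intro b x hx
    have hbR : (b : 𝔥) ∈ R := hRpR _ b.2
    have hfix : φ (s (b : 𝔥)) x = x := by
      rw [hrefl _ hbR x, hx]; simp
    have hsb : φ (s (b : 𝔥)) (b : 𝔥) = -(b : 𝔥) := by
      rw [hrefl _ hbR, hnorm _ hbR]
      module
    have hinv2 : ∀ y : 𝔥, φ (s (b : 𝔥)) (φ (s (b : 𝔥)) y) = y := by
      intro y
      rw [hrefl _ hbR, hrefl _ hbR]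
      have h1 : Bh (y - (2 * Bh y (b : 𝔥)) • (b : 𝔥)) (b : 𝔥)
          = Bh y (b : 𝔥) - (2 * Bh y (b : 𝔥)) * Bh (b : 𝔥) (b : 𝔥) := by
        simp [map_sub, map_smul]
      rw [h1, hnorm _ hbR]
      module
    have heq : μ x = ρ (s (b : 𝔥)) (μ x) := by
      conv_lhs => rw [← hfix]
      exact hμ _ x
    have hexp : (ρ (s (b : 𝔥)) (μ x) : V)
        = ∑ c : Rp, (bV.repr (μ x) c) • br (φ (s (b : 𝔥)) (c : 𝔥)) := by
      conv_lhs => rw [← bV.sum_repr (μ x)]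
      rw [map_sum]
      refine Finset.sum_congr rfl fun c _ => ?_
      rw [map_smul, hbV c, hρ _ _ (hRpR _ c.2)]
    have hval : ∀ c : Rp, bV.repr (br (φ (s (b : 𝔥)) (c : 𝔥))) b
        = if c = b then -1 else 0 := by
      intro c
      have hcR : φ (s (b : 𝔥)) (c : 𝔥) ∈ R := hWR _ _ (hRpR _ c.2)
      rw [repr_br _ hcR b]
      by_cases hc : c = b
      · subst hc
        rw [hsb, if_neg, if_pos rfl, if_pos rfl]
        intro hc2
        have h1 : Bh (c : 𝔥) (c : 𝔥) = 1 := hnorm _ (hRpR _ c.2)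
        have h2 : Bh (-(c : 𝔥)) (c : 𝔥) = 1 := by rw [hc2]; exact h1
        rw [map_neg, LinearMap.neg_apply, h1] at h2
        norm_num at h2
      · rw [if_neg, if_neg, if_neg hc]
        · intro h2
          apply hc
          have h3 := hinv2 (c : 𝔥)
          rw [h2, map_neg, hsb, neg_neg] at h3
          exact Subtype.ext h3.symm
        · intro h2
          have h3 := hinv2 (c : 𝔥)
          rw [h2, hsb] at h3
          exact hnegRp _ b.2 (h3 ▸ c.2)
    have hkey : bV.repr (μ x) b
        = ∑ c : Rp, (bV.repr (μ x) c) * bV.repr (br (φ (s (b : 𝔥)) (c : 𝔥))) b := by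
      conv_lhs => rw [heq, hexp]
      rw [map_sum, Finsupp.coe_finset_sum, Finset.sum_apply]
      refine Finset.sum_congr rfl fun c _ => ?_
      rw [map_smul, Finsupp.smul_apply, smul_eq_mul]
    have h2 : bV.repr (μ x) b = -(bV.repr (μ x) b) := by
      conv_lhs => rw [hkey]
      simp only [hval, mul_ite, mul_neg_one, mul_zero]
      simp [Finset.sum_ite_eq']
    have h3 : bV.repr (μ x) b + bV.repr (μ x) b = 0 := by linear_combination h2
    exact add_self_eq_zero.mp h3
  -- proportionality
  have hB : ∀ b : Rp, ∀ x : 𝔥,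
      bV.repr (μ x) b = Bh x (b : 𝔥) * bV.repr (μ (b : 𝔥)) b := by
    intro b x
    have h0 : Bh (x - (Bh x (b : 𝔥)) • (b : 𝔥)) (b : 𝔥) = 0 := by
      have h1 : Bh (x - (Bh x (b : 𝔥)) • (b : 𝔥)) (b : 𝔥)
          = Bh x (b : 𝔥) - (Bh x (b : 𝔥)) * Bh (b : 𝔥) (b : 𝔥) := by
        simp [map_sub, map_smul]
      rw [h1, hnorm _ (hRpR _ b.2)]; ring
    have h2 := hA b _ h0
    simp only [map_sub, map_smul, Finsupp.sub_apply, Finsupp.smul_apply,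
      smul_eq_mul] at h2
    linear_combination h2
  set D : 𝔥 → ℂ := fun β => if h : β ∈ Rp then bV.repr (μ β) ⟨β, h⟩ else 0 with hDdef
  set pos : 𝔥 → 𝔥 := fun δ => if δ ∈ Rp then δ else -δ with hposdef
  have hDval : ∀ b : Rp, D (b : 𝔥) = bV.repr (μ (b : 𝔥)) b := by
    intro b
    simp only [hDdef, dif_pos b.2, Subtype.coe_eta]
  have hposRp : ∀ β ∈ Rp, pos β = β := fun β hβ => by
    simp only [hposdef, if_pos hβ]
  have hpos : ∀ δ ∈ R, pos δ ∈ Rp := by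
    intro δ hδ
    by_cases h : δ ∈ Rp
    · rw [hposRp δ h]; exact h
    · rw [hR] at hδ
      rcases Finset.mem_union.1 hδ with h' | h'
      · exact absurd h' h
      · rcases Finset.mem_image.1 h' with ⟨ε, hε, rfl⟩
        simpa [hposdef, h] using hε
  have hposcases : ∀ δ : 𝔥, δ = pos δ ∨ δ = -pos δ := by
    intro δ; by_cases h : δ ∈ Rp <;> simp [hposdef, h]
  have hposneg : ∀ δ ∈ R, pos (-δ) = pos δ := by
    intro δ hδ
    by_cases h : δ ∈ Rp
    · have h2 : -δ ∉ Rp := hnegRp δ h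
      simp [hposdef, h, h2]
    · have h2 : -δ ∈ Rp := by
        rw [hR] at hδ
        rcases Finset.mem_union.1 hδ with h' | h'
        · exact absurd h' h
        · rcases Finset.mem_image.1 h' with ⟨ε, hε, rfl⟩
          simpa using hε
      simp [hposdef, h, h2]
  -- expansion formula
  have hC : ∀ x : 𝔥, μ x = ∑ b : Rp, (D (b : 𝔥) * Bh x (b : 𝔥)) • br (b : 𝔥) := by
    intro x
    conv_lhs => rw [← bV.sum_repr (μ x)]
    refine Finset.sum_congr rfl fun b _ => ?_
    rw [hB b x, ← hDval, mul_comm, hbV]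
  -- invariance of the coefficients
  have hInv : ∀ (w : W) (b g : Rp), (φ w (g : 𝔥) = (b : 𝔥) ∨ φ w (g : 𝔥) = -(b : 𝔥)) →
      D (g : 𝔥) = D (b : 𝔥) := by
    intro w b g hcase
    have hinj := (φ w).injective
    have hmain := hμ w (g : 𝔥)
    have hL : bV.repr (μ (φ w (g : 𝔥))) b = Bh (φ w (g : 𝔥)) (b : 𝔥) * D (b : 𝔥) := by
      rw [hB, hDval]
    have hRHS : bV.repr ((ρ w) (μ (g : 𝔥))) b
        = ∑ c : Rp, (D (c : 𝔥) * Bh (g : 𝔥) (c : 𝔥)) * bV.repr (br (φ w (c : 𝔥))) b := by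
      rw [hC (g : 𝔥), map_sum, map_sum, Finsupp.coe_finset_sum, Finset.sum_apply]
      refine Finset.sum_congr rfl fun c _ => ?_
      rw [map_smul, hρ _ _ (hRpR _ c.2), map_smul, Finsupp.smul_apply, smul_eq_mul]
    have hval0 : ∀ c : Rp, c ≠ g → bV.repr (br (φ w (c : 𝔥))) b = 0 := by
      intro c hcg
      rcases hcase with h | h
      · have hne1 : φ w (c : 𝔥) ≠ (b : 𝔥) := fun h2 =>
          hcg (Subtype.ext (hinj (h2.trans h.symm)))
        have hne2 : φ w (c : 𝔥) ≠ -(b : 𝔥) := by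
          intro h2
          have hc : (c : 𝔥) = -(g : 𝔥) := hinj (by rw [h2, map_neg, h])
          exact hnegRp _ g.2 (hc ▸ c.2)
        rw [repr_br _ (hWR w _ (hRpR _ c.2)) b, if_neg hne1, if_neg hne2]
      · have hne1 : φ w (c : 𝔥) ≠ (b : 𝔥) := by
          intro h2
          have hc : (c : 𝔥) = -(g : 𝔥) := hinj (by rw [h2, map_neg, h, neg_neg])
          exact hnegRp _ g.2 (hc ▸ c.2)
        have hne2 : φ w (c : 𝔥) ≠ -(b : 𝔥) := fun h2 =>
          hcg (Subtype.ext (hinj (h2.trans h.symm)))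
        rw [repr_br _ (hWR w _ (hRpR _ c.2)) b, if_neg hne1, if_neg hne2]
    have hsum : bV.repr ((ρ w) (μ (g : 𝔥))) b
        = (D (g : 𝔥) * Bh (g : 𝔥) (g : 𝔥)) * bV.repr (br (φ w (g : 𝔥))) b := by
      rw [hRHS]
      exact Finset.sum_eq_single_of_mem g (Finset.mem_univ g)
        (fun c _ hcg => by rw [hval0 c hcg, mul_zero])
    rw [hnorm _ (hRpR _ g.2), mul_one] at hsum
    have heq2 : Bh (φ w (g : 𝔥)) (b : 𝔥) * D (b : 𝔥)
        = D (g : 𝔥) * bV.repr (br (φ w (g : 𝔥))) b := by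
      rw [← hL, hmain, hsum]
    rcases hcase with h | h
    · rw [h, hnorm _ (hRpR _ b.2), one_mul, repr_br _ (hRpR _ b.2) b,
        if_pos rfl, mul_one] at heq2
      exact heq2.symm
    · have hnbR : -(b : 𝔥) ∈ R := by
        rw [hR]
        exact Finset.mem_union_right _ (Finset.mem_image_of_mem _ b.2)
      have hnb : (-(b : 𝔥) : 𝔥) ≠ (b : 𝔥) := by
        intro hc
        exact hnegRp _ b.2 (by rw [hc]; exact b.2)
      rw [h, map_neg, LinearMap.neg_apply, hnorm _ (hRpR _ b.2),
        repr_br _ hnbR b, if_neg hnb, if_pos rfl] at heq2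
      linear_combination heq2
  refine ⟨fun δ => D (pos δ) / 2, ?_, ?_⟩
  · -- invariance
    intro w α hα
    show D (pos (φ w α)) / 2 = D (pos α) / 2
    have hpα : pos α ∈ Rp := hpos α hα
    have hwpR : φ w (pos α) ∈ R := hWR w _ (hRpR _ hpα)
    have key : D (pos (φ w (pos α))) = D (pos α) := by
      have hb : pos (φ w (pos α)) ∈ Rp := hpos _ hwpR
      have hcase : φ w ((⟨pos α, hpα⟩ : Rp) : 𝔥) = ((⟨pos (φ w (pos α)), hb⟩ : Rp) : 𝔥)
          ∨ φ w ((⟨pos α, hpα⟩ : Rp) : 𝔥) = -((⟨pos (φ w (pos α)), hb⟩ : Rp) : 𝔥) := by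
        simpa using (hposcases (φ w (pos α)))
      exact (hInv w ⟨pos (φ w (pos α)), hb⟩ ⟨pos α, hpα⟩ hcase).symm
    have hgoal : pos (φ w α) = pos (φ w (pos α)) := by
      rcases hposcases α with h | h
      · conv_lhs => rw [h]
      · conv_lhs => rw [h]
        rw [map_neg, hposneg _ hwpR]
    rw [hgoal, key]
  · -- the formula
    intro x
    rw [hC x, hR, Finset.sum_union hdisj,
      Finset.sum_image (fun a _ b _ h => neg_injective h)]
    have hterm : ∀ β ∈ Rp,
        ((D (pos (-β)) / 2) * Bh x (-β)) • br (-β)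
          = ((D β / 2) * Bh x β) • br β := by
      intro β hβ
      rw [hposneg β (hRpR β hβ), hbrneg β (hRpR β hβ), map_neg,
        hposRp β hβ, mul_neg, neg_smul, smul_neg, neg_neg]
    have hLHS : (∑ b : Rp, (D (b : 𝔥) * Bh x (b : 𝔥)) • br (b : 𝔥))
        = ∑ β ∈ Rp, (D β * Bh x β) • br β :=
      Finset.sum_coe_sort Rp (fun β => (D β * Bh x β) • br β)
    rw [hLHS, Finset.sum_congr rfl hterm, ← Finset.sum_add_distrib]
    refine Finset.sum_congr rfl fun β hβ => ?_
    show (D β * Bh x β) • br β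
      = (D (pos β) / 2 * Bh x β) • br β + (D β / 2 * Bh x β) • br β
    rw [hposRp β hβ, ← add_smul]
    congr 1
    ring
end

section
/- For any W-invariant scalar function c on R and any x, y ∈ 𝔥, setting μ(x) = Σ_{α∈R} c_α(x,α)[α], the symmetrized tensors agree: (id + Ψ)(μ(x) ⊗ μ(y)) = (id + Ψ)(μ(y) ⊗ μ(x)) in V_W ⊗ V_W, where Ψ([α]⊗[β]) = [s_α β]⊗[α]. Consequently μ(x) and μ(y) commute in the Nichols–Woronowicz algebra of V_W. -/
open TensorProduct

/-- Let `R` be the root system of a finite Coxeter group inside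
the reflection representation `𝔥`, normalized so `(α,α) = 1` for all roots and with
`s_β α = α − 2(α,β)β`; let `V_W` be the braided vector space spanned by
`[α] = br α`, `α ∈ R`, with `[−α] = −[α]` and Yetter–Drinfeld braiding
`Ψ([α] ⊗ [β]) = [s_α β] ⊗ [α]`.  For any `W`-invariant (equivalently,
reflection-invariant) scalar function `c` on `R` and any `x, y ∈ 𝔥`, setting
`μ(x) = Σ_{α ∈ R} c_α (x,α) [α]`, the symmetrized tensors agree:
`(id + Ψ)(μ(x) ⊗ μ(y)) = (id + Ψ)(μ(y) ⊗ μ(x))` in `V_W ⊗ V_W`.  Consequently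
`μ(x)` and `μ(y)` commute in the Nichols–Woronowicz algebra of `V_W` (here: in any
algebra `A` receiving `V_W` in which the kernel of `id + Ψ` maps to zero). -/
theorem mu_symmetrized_tensors_agree_and_commute
    {𝔥 : Type*} [AddCommGroup 𝔥] [Module ℂ 𝔥]
    (Bh : 𝔥 →ₗ[ℂ] 𝔥 →ₗ[ℂ] ℂ)
    (hBhsymm : ∀ x y, Bh x y = Bh y x)
    (R : Finset 𝔥)
    (hnorm : ∀ α ∈ R, Bh α α = 1)
    (hclosed : ∀ α ∈ R, ∀ β ∈ R, β - (2 * Bh β α) • α ∈ R)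
    {V : Type*} [AddCommGroup V] [Module ℂ V]
    (br : 𝔥 → V)
    (hbrneg : ∀ α ∈ R, br (-α) = -br α)
    (Ψ : (V ⊗[ℂ] V) ≃ₗ[ℂ] (V ⊗[ℂ] V))
    (hΨ : ∀ α ∈ R, ∀ β ∈ R,
      Ψ (br α ⊗ₜ[ℂ] br β) = br (β - (2 * Bh β α) • α) ⊗ₜ[ℂ] br α)
    (c : 𝔥 → ℂ)
    (hc : ∀ α ∈ R, ∀ β ∈ R, c (β - (2 * Bh β α) • α) = c β)
    (μ : 𝔥 → V)
    (hμ : ∀ x : 𝔥, μ x = ∑ α ∈ R, (c α * Bh x α) • br α)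
    (x y : 𝔥) :
    ((LinearMap.id + Ψ.toLinearMap : V ⊗[ℂ] V →ₗ[ℂ] V ⊗[ℂ] V)) (μ x ⊗ₜ[ℂ] μ y) =
      ((LinearMap.id + Ψ.toLinearMap : V ⊗[ℂ] V →ₗ[ℂ] V ⊗[ℂ] V)) (μ y ⊗ₜ[ℂ] μ x) ∧
    (∀ (A : Type*) [Ring A] [Algebra ℂ A] (ι : V →ₗ[ℂ] A),
      (∀ t : V ⊗[ℂ] V, ((LinearMap.id + Ψ.toLinearMap : V ⊗[ℂ] V →ₗ[ℂ] V ⊗[ℂ] V)) t = 0 →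
        LinearMap.mul' ℂ A (TensorProduct.map ι ι t) = 0) →
      ι (μ x) * ι (μ y) = ι (μ y) * ι (μ x)) := by
  classical
  -- the reflection
  set s : 𝔥 → 𝔥 → 𝔥 := fun α β => β - (2 * Bh β α) • α with hs
  have hBs : ∀ v α β : 𝔥, Bh v (s α β) = Bh v β - 2 * Bh β α * Bh v α := by
    intro v α β
    simp only [hs, map_sub, map_smul, smul_eq_mul]
  have hBs' : ∀ α ∈ R, ∀ β : 𝔥, Bh (s α β) α = Bh β α - 2 * Bh β α := by
    intro α hα β
    simp only [hs, map_sub, map_smul, LinearMap.sub_apply, LinearMap.smul_apply,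
      smul_eq_mul, hnorm α hα, mul_one]
  have hsinv : ∀ α ∈ R, ∀ β : 𝔥, s α (s α β) = β := by
    intro α hα β
    have h1 := hBs' α hα β
    simp only [hs] at h1 ⊢
    rw [h1]
    module
  -- key computation
  have key : ∀ u v : 𝔥,
      ((LinearMap.id + Ψ.toLinearMap : V ⊗[ℂ] V →ₗ[ℂ] V ⊗[ℂ] V)) (μ u ⊗ₜ[ℂ] μ v)
        = ∑ α ∈ R, ∑ β ∈ R,
            (c α * c β * (Bh u α * Bh v β + Bh u β * Bh v α
              - 2 * Bh α β * Bh u β * Bh v β)) • (br α ⊗ₜ[ℂ] br β) := by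
    intro u v
    have hten : μ u ⊗ₜ[ℂ] μ v
        = ∑ α ∈ R, ∑ β ∈ R, ((c α * Bh u α) * (c β * Bh v β)) • (br α ⊗ₜ[ℂ] br β) := by
      rw [hμ, hμ, TensorProduct.sum_tmul]
      refine Finset.sum_congr rfl fun α hα => ?_
      rw [TensorProduct.tmul_sum]
      refine Finset.sum_congr rfl fun β hβ => ?_
      rw [TensorProduct.tmul_smul, TensorProduct.smul_tmul', smul_smul,
        mul_comm (c β * Bh v β) (c α * Bh u α)]
      exact (TensorProduct.smul_tmul' _ _ _).symm
    have hΨpart : Ψ.toLinearMap (μ u ⊗ₜ[ℂ] μ v)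
        = ∑ α ∈ R, ∑ β ∈ R,
            ((c β * Bh u β) * (c α * (Bh v α - 2 * Bh α β * Bh v β)))
              • (br α ⊗ₜ[ℂ] br β) := by
      rw [hten, map_sum]
      rw [Finset.sum_comm]
      refine Finset.sum_congr rfl fun α hα => ?_
      rw [map_sum]
      refine Finset.sum_nbij' (s α) (s α)
        (fun β hβ => hclosed α hα β hβ) (fun β hβ => hclosed α hα β hβ)
        (fun β hβ => hsinv α hα β) (fun β hβ => hsinv α hα β) ?_
      intro β hβ
      simp only [hs, map_smul, LinearEquiv.coe_coe]
      rw [hΨ α hα β hβ, hc α hα β hβ]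
      congr 1
      simp only [map_sub, map_smul, LinearMap.sub_apply, LinearMap.smul_apply, smul_eq_mul]
      rw [hnorm α hα]
      ring
    rw [LinearMap.add_apply, LinearMap.id_apply, hΨpart, hten,
      ← Finset.sum_add_distrib]
    refine Finset.sum_congr rfl fun α hα => ?_
    rw [← Finset.sum_add_distrib]
    refine Finset.sum_congr rfl fun β hβ => ?_
    rw [← add_smul]
    congr 1
    ring
  have main : ((LinearMap.id + Ψ.toLinearMap : V ⊗[ℂ] V →ₗ[ℂ] V ⊗[ℂ] V)) (μ x ⊗ₜ[ℂ] μ y) =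
      ((LinearMap.id + Ψ.toLinearMap : V ⊗[ℂ] V →ₗ[ℂ] V ⊗[ℂ] V)) (μ y ⊗ₜ[ℂ] μ x) := by
    rw [key x y, key y x]
    refine Finset.sum_congr rfl fun α hα => Finset.sum_congr rfl fun β hβ => ?_
    congr 1
    ring
  refine ⟨main, ?_⟩
  intro A _ _ ι hker
  have h0 : ((LinearMap.id + Ψ.toLinearMap : V ⊗[ℂ] V →ₗ[ℂ] V ⊗[ℂ] V))
      (μ x ⊗ₜ[ℂ] μ y - μ y ⊗ₜ[ℂ] μ x) = 0 := by
    rw [map_sub, main, sub_self]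
  have h1 := hker _ h0
  rw [map_sub, TensorProduct.map_tmul, TensorProduct.map_tmul, map_sub,
    LinearMap.mul'_apply, LinearMap.mul'_apply] at h1
  exact sub_eq_zero.mp h1
end

section
/- The explicit identity behind commutativity: for x, y ∈ 𝔥 and W-invariant coefficients c_α, Σ_{α,β∈R} c_α c_β ((x,α)(y,β) + (x,β)(y, s_β α)) [α]⊗[β] = Σ_{α,β∈R} c_α c_β ((y,α)(x,β) + (y,β)(x, s_β α)) [α]⊗[β] in V_W ⊗ V_W. -/
open TensorProduct

/-- The explicit identity behind commutativity: with `R` the root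
system of a finite Coxeter group in `𝔥`, `(α,α) = 1` for roots,
`s_β α = α − 2(α,β)β`, `V_W` spanned by `[α] = br α` with `[−α] = −[α]`, and
`c : R → ℂ` `W`-invariant, for all `x, y ∈ 𝔥`:
`Σ_{α,β∈R} c_α c_β ((x,α)(y,β) + (x,β)(y, s_β α)) [α]⊗[β]
  = Σ_{α,β∈R} c_α c_β ((y,α)(x,β) + (y,β)(x, s_β α)) [α]⊗[β]` in `V_W ⊗ V_W`. -/
theorem commutativity_scalar_identity
    {𝔥 : Type*} [AddCommGroup 𝔥] [Module ℂ 𝔥]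
    {W : Type*} [Group W] [Finite W]
    (φ : W →* (𝔥 ≃ₗ[ℂ] 𝔥))
    (Bh : 𝔥 →ₗ[ℂ] 𝔥 →ₗ[ℂ] ℂ)
    (hBhsymm : ∀ x y, Bh x y = Bh y x)
    (R : Finset 𝔥)
    (hnorm : ∀ α ∈ R, Bh α α = 1)
    {V : Type*} [AddCommGroup V] [Module ℂ V]
    (br : 𝔥 → V)
    (hbrneg : ∀ α ∈ R, br (-α) = -br α)
    (c : 𝔥 → ℂ)
    (hc : ∀ (w : W), ∀ α ∈ R, c (φ w α) = c α)
    (x y : 𝔥) :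
    ∑ α ∈ R, ∑ β ∈ R,
        (c α * c β * (Bh x α * Bh y β + Bh x β * Bh y (α - (2 * Bh α β) • β))) •
          (br α ⊗ₜ[ℂ] br β) =
      ∑ α ∈ R, ∑ β ∈ R,
        (c α * c β * (Bh y α * Bh x β + Bh y β * Bh x (α - (2 * Bh α β) • β))) •
          (br α ⊗ₜ[ℂ] br β) := by
  refine Finset.sum_congr rfl fun α _ => Finset.sum_congr rfl fun β _ => ?_
  congr 1
  simp only [map_sub, map_smul, smul_eq_mul]
  ring
end

section
/- In the Bruhat graph of the dihedral group 𝔻_m, the number of directed paths from the identity to an element v of length l (paths in which each edge corresponds to left multiplication by a reflection raising the length by 1) equals 2^{l−1} for l ≥ 1. -/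
/-!
A path in the Bruhat graph is determined by its vertices `1 = w₀, w₁, …, w_l = v`, which
satisfy `ℓ(w_k) = k`. In rank two every such sequence of vertices is a path: reduced words
alternate, so an element of odd length is the product of an alternating palindrome, hence a
reflection, and any two elements of lengths `k` and `k + 1` are joined by an edge. The number of paths is therefore
the product, over `0 < k < l`, of the number of elements of length `k`. That number is at most
two, since reduced words alternate, and it is exactly two below `ℓ(v)`: the two alternating
words of length `k` are a prefix and a suffix of a reduced word of length `k + 1`, and if their
products agreed, that word could be shortened by two letters.
-/

theorem Nat.card_sigma_of_card_eq {α : Type*} {β : α → Type*} [Finite α] {c : ℕ}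
    (h : ∀ a, Nat.card (β a) = c) (hc : c ≠ 0) : Nat.card (Σ a, β a) = Nat.card α * c := by
  have : ∀ a, Finite (β a) := fun a => Nat.finite_of_card_ne_zero ((h a).trans_ne hc)
  have := Fintype.ofFinite α
  rw [Nat.card_sigma, Finset.sum_congr rfl fun a _ => h a, Finset.sum_const, Finset.card_univ,
    smul_eq_mul, Nat.card_eq_fintype_card]

theorem List.foldl_mul_left_append_singleton {G : Type*} [Monoid G] (q : List G) (t : G) :
    (q ++ [t]).foldl (fun w t => t * w) 1 = t * q.foldl (fun w t => t * w) 1 := by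
  simp

namespace CoxeterSystem

section

variable {B W : Type*} [Group W] {M : CoxeterMatrix B} (cs : CoxeterSystem M W)

def IsBruhatPath (l : ℕ) (v : W) (p : List W) : Prop :=
  p.length = l ∧ (∀ t ∈ p, cs.IsReflection t) ∧
    (∀ k ≤ l, cs.length ((p.take k).foldl (fun w t => t * w) 1) = k) ∧
    p.foldl (fun w t => t * w) 1 = v

theorem card_isBruhatPath_zero : Nat.card {p // cs.IsBruhatPath 0 1 p} = 1 := by
  refine Nat.card_eq_one_iff_exists.mpr ⟨⟨[], by simp [IsBruhatPath]⟩, fun p => ?_⟩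
  exact Subtype.ext (List.eq_nil_of_length_eq_zero p.2.1)

namespace IsBruhatPath

variable {cs} {l : ℕ} {u v t : W} {p : List W}

theorem take (hp : cs.IsBruhatPath l v p) {k : ℕ} (hk : k ≤ l) :
    cs.IsBruhatPath k ((p.take k).foldl (fun w t => t * w) 1) (p.take k) := by
  obtain ⟨hlen, hrefl, hvert, -⟩ := hp
  refine ⟨by simp [hlen, hk], fun t ht => hrefl t (List.take_subset k p ht), fun j hj => ?_,
    rfl⟩
  rw [List.take_take, min_eq_left hj]
  exact hvert j (hj.trans hk)

theorem append_singleton (hp : cs.IsBruhatPath l u p) (ht : cs.IsReflection t)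
    (hlen : cs.length (t * u) = l + 1) : cs.IsBruhatPath (l + 1) (t * u) (p ++ [t]) := by
  obtain ⟨hplen, hrefl, hvert, hend⟩ := hp
  refine ⟨by simp [hplen], ?_, fun k hk => ?_, ?_⟩
  · simpa [or_imp, forall_and] using ⟨hrefl, ht⟩
  · rcases hk.lt_or_eq with hk | rfl
    · rw [List.take_append_of_le_length (by omega)]
      exact hvert k (by omega)
    · rwa [List.take_of_length_le (by simp [hplen]), List.foldl_mul_left_append_singleton, hend]
  · rw [List.foldl_mul_left_append_singleton, hend]

theorem eq_take_append_singleton (hp : cs.IsBruhatPath (l + 1) v p) :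
    p = p.take l ++ [v * ((p.take l).foldl (fun w t => t * w) 1)⁻¹] := by
  obtain ⟨hlen, -, -, hend⟩ := hp
  obtain ⟨t, ht⟩ : ∃ t, p.drop l = [t] := List.length_eq_one_iff.mp (by simp [hlen])
  have hp : p = p.take l ++ [t] := by rw [← ht, List.take_append_drop]
  rw [hp, List.foldl_mul_left_append_singleton] at hend
  rwa [← hend, mul_inv_cancel_right]

end IsBruhatPath

def bruhatPathSuccEquiv {l : ℕ} {v : W} (hv : cs.length v = l + 1)
    (hrefl : ∀ u, cs.length u = l → cs.IsReflection (v * u⁻¹)) :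
    {p // cs.IsBruhatPath (l + 1) v p} ≃
      Σ u : {u : W // cs.length u = l}, {q // cs.IsBruhatPath l u q} where
  toFun p := ⟨⟨_, p.2.2.2.1 l l.le_succ⟩, ⟨_, p.2.take l.le_succ⟩⟩
  invFun x := ⟨x.2 ++ [v * x.1.1⁻¹],
    by simpa using x.2.2.append_singleton (hrefl _ x.1.2) (by simpa using hv)⟩
  left_inv p := Subtype.ext p.2.eq_take_append_singleton.symm
  right_inv x := by
    have hq : (x.2.1 ++ [v * x.1.1⁻¹]).take l = x.2.1 := List.take_left' x.2.2.1
    exact Sigma.subtype_ext (Subtype.ext (by simpa [hq] using x.2.2.2.2.2)) hq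

theorem not_isReduced_append_pair (ω : List B) (i : B) : ¬ cs.IsReduced (ω ++ [i, i]) := by
  intro h
  have hle := cs.length_wordProd_le ω
  rw [IsReduced, wordProd_append, wordProd_cons, wordProd_singleton, ← mul_assoc,
    simple_mul_simple_cancel_right] at h
  simp only [List.length_append, List.length_cons, List.length_nil] at h
  omega

theorem IsReduced.alternatingWord_of_succ {i i' : B} {k : ℕ}
    (h : cs.IsReduced (alternatingWord i i' (k + 1))) :
    cs.IsReduced (alternatingWord i i' k) ∧ cs.IsReduced (alternatingWord i' i k) :=
  ⟨by simpa [alternatingWord_succ'] using h.drop 1,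
    by simpa [alternatingWord_succ] using h.take k⟩

/-- Equal products would let `alternatingWord i i' (k + 1)` be shortened to
`alternatingWord i' i (k - 1)`. -/
theorem wordProd_alternatingWord_ne {i i' : B} {k : ℕ} (hk : 0 < k)
    (h : cs.IsReduced (alternatingWord i i' (k + 1))) :
    cs.wordProd (alternatingWord i i' k) ≠ cs.wordProd (alternatingWord i' i k) := by
  obtain ⟨k, rfl⟩ := Nat.exists_eq_add_one_of_ne_zero hk.ne'
  intro heq
  have hshort : cs.wordProd (alternatingWord i i' (k + 2)) =
      cs.wordProd (alternatingWord i' i k) := by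
    rw [alternatingWord_succ, wordProd_concat, ← heq, alternatingWord_succ, wordProd_concat,
      simple_mul_simple_cancel_right]
  have hle := cs.length_wordProd_le (alternatingWord i' i k)
  rw [IsReduced, hshort] at h
  simp only [length_alternatingWord] at h hle
  omega

theorem isReflection_wordProd_alternatingWord (i i' : B) {k : ℕ} (hk : Odd k) :
    cs.IsReflection (cs.wordProd (alternatingWord i i' k)) := by
  obtain ⟨e, rfl⟩ := hk
  induction e generalizing i i' with
  | zero => simpa [alternatingWord] using cs.isReflection_simple i'
  | succ e ih =>
    have hword : alternatingWord i i' (2 * (e + 1) + 1) =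
        i' :: alternatingWord i' i (2 * e + 1) ++ [i'] := by
      rw [show 2 * (e + 1) + 1 = 2 * e + 1 + 1 + 1 by ring, alternatingWord_succ,
        alternatingWord_succ']
      simp
    simpa [hword, wordProd_append, wordProd_cons, mul_assoc] using
      (ih i' i).conj (cs.simple i')

end

section

variable {W : Type*} [Group W] {M : CoxeterMatrix (Fin 2)} (cs : CoxeterSystem M W)

theorem IsReduced.eq_alternatingWord {ω : List (Fin 2)} (hω : cs.IsReduced ω) :
    ∃ i i', i ≠ i' ∧ ω = alternatingWord i i' ω.length := by
  induction ω using List.reverseRecOn with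
  | nil => exact ⟨0, 1, by decide, rfl⟩
  | append_singleton ω x ih =>
    obtain ⟨i, i', hii', hω'⟩ := ih (by simpa using hω.take ω.length)
    rw [List.length_append, List.length_singleton]
    rcases hlen : ω.length with _ | n
    · rw [List.length_eq_zero_iff.mp hlen]
      exact ⟨x + 1, x, by omega, rfl⟩
    · rw [hlen, alternatingWord_succ] at hω'
      have hx : x ≠ i' := by
        intro hxi
        rw [hxi, hω'] at hω
        exact cs.not_isReduced_append_pair _ _ (by simpa using hω)
      refine ⟨i', i, hii'.symm, ?_⟩
      rw [hω', show x = i by omega, alternatingWord_succ, alternatingWord_succ]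
      simp only [List.concat_eq_append]

theorem exists_eq_wordProd_alternatingWord (w : W) :
    ∃ i i', i ≠ i' ∧ w = cs.wordProd (alternatingWord i i' (cs.length w)) := by
  obtain ⟨ω, hω, rfl⟩ := cs.exists_isReduced w
  obtain ⟨i, i', hii', hω'⟩ := hω.eq_alternatingWord
  exact ⟨i, i', hii', by rw [hω.eq, ← hω']⟩

theorem isReflection_of_odd_length {t : W} (ht : Odd (cs.length t)) : cs.IsReflection t := by
  obtain ⟨i, i', -, h⟩ := cs.exists_eq_wordProd_alternatingWord t
  rw [h]
  exact cs.isReflection_wordProd_alternatingWord i i' ht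

theorem isReflection_mul_inv_of_length_succ {u v : W} {l : ℕ} (hv : cs.length v = l + 1)
    (hu : cs.length u = l) : cs.IsReflection (v * u⁻¹) :=
  cs.isReflection_of_odd_length <| Nat.odd_iff.mpr <| by
    rw [cs.length_mul_mod_two, cs.length_inv, hv, hu]
    omega

theorem card_length_eq_two {v : W} {k : ℕ} (hk : 0 < k) (hkv : k < cs.length v) :
    Nat.card {u // cs.length u = k} = 2 := by
  obtain ⟨ω, hω, rfl⟩ := cs.exists_isReduced v
  have htake : (ω.take (k + 1)).length = k + 1 :=
    List.length_take_of_le (by rw [← hω.eq]; omega)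
  obtain ⟨i, i', hii', hω'⟩ := (hω.take (k + 1)).eq_alternatingWord
  have hred : cs.IsReduced (alternatingWord i i' (k + 1)) := by
    rw [← htake, ← hω']
    exact hω.take (k + 1)
  obtain ⟨hred₁, hred₂⟩ := hred.alternatingWord_of_succ
  rw [Nat.card_eq_two_iff]
  refine ⟨⟨_, hred₁.eq.trans (length_alternatingWord ..)⟩,
    ⟨_, hred₂.eq.trans (length_alternatingWord ..)⟩,
    fun h => cs.wordProd_alternatingWord_ne hk hred (congrArg Subtype.val h), ?_⟩
  ext ⟨u, hu⟩
  obtain ⟨j, j', hjj', hu'⟩ := cs.exists_eq_wordProd_alternatingWord u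
  rw [hu] at hu'
  obtain ⟨rfl, rfl⟩ | ⟨rfl, rfl⟩ : (j = i ∧ j' = i') ∨ (j = i' ∧ j' = i) := by omega
  all_goals simp [hu']

end

end CoxeterSystem

theorem dihedral_bruhat_path_count_general
    {W : Type*} [Group W]
    (M : CoxeterMatrix (Fin 2))
    (cs : CoxeterSystem M W)
    (v : W) (l : ℕ) (hv : cs.length v = l) :
    Nat.card {p : List W //
      p.length = l ∧
      (∀ t ∈ p, cs.IsReflection t) ∧
      (∀ k ≤ l, cs.length ((p.take k).foldl (fun w t => t * w) 1) = k) ∧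
      p.foldl (fun w t => t * w) 1 = v} = 2 ^ (l - 1) := by
  show Nat.card {p // cs.IsBruhatPath l v p} = 2 ^ (l - 1)
  induction l generalizing v with
  | zero => rw [cs.length_eq_zero_iff.mp hv, cs.card_isBruhatPath_zero]; rfl
  | succ l ih =>
    have hpred : Nat.card {u // cs.length u = l} * 2 ^ (l - 1) = 2 ^ l := by
      rcases Nat.eq_zero_or_pos l with rfl | hl
      · simp
      · rw [cs.card_length_eq_two (v := v) hl (by omega), ← pow_succ', Nat.sub_add_cancel hl]
    have : Finite {u // cs.length u = l} :=
      Nat.finite_of_card_ne_zero (left_ne_zero_of_mul (by rw [hpred]; positivity))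
    have hedge : ∀ u, cs.length u = l → cs.IsReflection (v * u⁻¹) :=
      fun u => cs.isReflection_mul_inv_of_length_succ hv
    rw [Nat.card_congr (cs.bruhatPathSuccEquiv hv hedge),
      Nat.card_sigma_of_card_eq (fun u : {u // cs.length u = l} => ih u.1 u.2) (by positivity),
      hpred, Nat.add_sub_cancel]

/-- In the Bruhat graph of the dihedral group `𝔻_m` of type
`I₂(m)` (vertex set `𝔻_m`, a directed edge `w → t * w` for each reflection `t`
with `ℓ(t * w) = ℓ(w) + 1`), the number of directed paths from the identity to an
element `v` of length `l ≥ 1` equals `2^(l−1)`.  A path is recorded as the list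
`p = [t₁, …, t_l]` of reflections applied on the left, so the `k`-th intermediate
vertex is `t_k ⋯ t₁` and must have length `k`. -/
theorem dihedral_bruhat_path_count
    {W : Type*} [Group W] (m : ℕ) (hm : 2 ≤ m)
    (M : CoxeterMatrix (Fin 2)) (hM : M.M = !![1, m; m, 1])
    (cs : CoxeterSystem M W)
    (v : W) (l : ℕ) (hl : 1 ≤ l) (hv : cs.length v = l) :
    Nat.card {p : List W //
      p.length = l ∧
      (∀ t ∈ p, cs.IsReflection t) ∧
      (∀ k ≤ l, cs.length ((p.take k).foldl (fun w t => t * w) 1) = k) ∧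
      p.foldl (fun w t => t * w) 1 = v} = 2 ^ (l - 1) :=
  dihedral_bruhat_path_count_general M cs v l hv
end

section
/- The braided symmetriser equals the sum over the Matsumoto section: Σ_{π ∈ 𝕊_n} t(π) = [n]!_σ in ℂ𝔹_n, where t(π) = σ_{i_1}⋯σ_{i_l} for any reduced decomposition π = s_{i_1}⋯s_{i_l}. -/
/-- The braid relations on the free group with generators `σ₀, …, σ_{n−1}`
(0-indexed): `σᵢσⱼσᵢ = σⱼσᵢσⱼ` for `j = i + 1` and `σᵢσⱼ = σⱼσᵢ` for `i + 2 ≤ j`. -/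
def braidRels (n : ℕ) : Set (FreeGroup (Fin n)) :=
  {r | (∃ i j : Fin n, (j : ℕ) = (i : ℕ) + 1 ∧
          r = FreeGroup.of i * FreeGroup.of j * FreeGroup.of i *
                (FreeGroup.of j * FreeGroup.of i * FreeGroup.of j)⁻¹) ∨
       (∃ i j : Fin n, (i : ℕ) + 2 ≤ (j : ℕ) ∧
          r = FreeGroup.of i * FreeGroup.of j *
                (FreeGroup.of j * FreeGroup.of i)⁻¹)}

/-- The braid group `𝔹_n` on `n` strands, with generators `σ₁, …, σ_{n−1}`
indexed by `Fin (n−1)`. -/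
abbrev BraidGroup (n : ℕ) := PresentedGroup (braidRels (n - 1))

/-- The generator `σ_i` (1-indexed) of `𝔹_n`. -/
noncomputable def sig (n : ℕ) (i : ℕ) : BraidGroup n :=
  if h : i - 1 < n - 1 then PresentedGroup.of (⟨i - 1, h⟩ : Fin (n - 1)) else 1

/-- The descending chain `σ_{s+j−1} σ_{s+j−2} ⋯ σ_s` (`j` factors). -/
noncomputable def sigChain (n s : ℕ) : ℕ → BraidGroup n
  | 0 => 1
  | j + 1 => sig n (s + j) * sigChain n s j

/-- The shifted braided integer `[k]_σ^{(s)}` in `ℂ𝔹_n`. -/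
noncomputable def bint (n s k : ℕ) : MonoidAlgebra ℂ (BraidGroup n) :=
  ∑ j ∈ Finset.range k, MonoidAlgebra.of ℂ (BraidGroup n) (sigChain n s j)

/-- The braided factorial `bfact n s k = [k]_σ^{(s)} [k−1]_σ^{(s+1)} ⋯
[2]_σ^{(s+k−2)}`; in particular `bfact n 1 n = [n]!_σ`. -/
noncomputable def bfact (n : ℕ) : ℕ → ℕ → MonoidAlgebra ℂ (BraidGroup n)
  | _, 0 => 1
  | s, k + 1 => bint n s (k + 1) * bfact n (s + 1) k

/-!
Let `G_s ≤ 𝕊_{n+1}` be the pointwise stabiliser of `0, …, s-1`. Every `π ∈ G_s` factors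
uniquely as `c_{s,j} π'` with `π' ∈ G_{s+1}` and `0 ≤ j ≤ n-s`, where `c_{s,j} = s_{s+j-1} ⋯ s_s`
sends `s` to `s+j`, and inversion numbers add: `inv (c_{s,j} π') = j + inv π'`. An adjacent
transposition changes the inversion number by at most one, so a word whose length is the
inversion number of its product is reduced. Hence concatenating reduced words of `c_{s,j}` and
`π'` gives a reduced word of `π`, and `t (c_{s,j} π') = σ_{s+j} ⋯ σ_{s+1} t π'`. Summing over `j`
factors the sum over `G_s` as `[n+1-s]_σ^{(s+1)}` times the sum over `G_{s+1}`, and descending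
induction on `s` gives `[n+1]!_σ`.
-/

namespace BraidedSymmetriser

open Equiv Finset

section Inversions

variable {α : Type*} [LinearOrder α]

lemma swap_lt_swap_iff_of_covBy {a b u v : α} (hab : a ⋖ b) (hne : ¬(u = b ∧ v = a))
    (hne' : ¬(u = a ∧ v = b)) : swap a b u < swap a b v ↔ u < v := by
  have hbelow : ∀ {c}, c < b ↔ c ≤ a := hab.lt_iff_le_left
  have habove : ∀ {c}, a < c ↔ b ≤ c := fun {_} => ⟨hab.ge_of_gt, hab.lt.trans_le⟩
  simp only [swap_apply_def]
  split_ifs <;> grind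

variable [Fintype α]

def inversions (π : Perm α) : Finset (α × α) :=
  {p | p.1 < p.2 ∧ π p.2 < π p.1}

def invCount (π : Perm α) : ℕ := #(inversions π)

@[simp]
lemma mem_inversions {π : Perm α} {p : α × α} :
    p ∈ inversions π ↔ p.1 < p.2 ∧ π p.2 < π p.1 := by
  simp [inversions]

@[simp]
lemma invCount_one : invCount (1 : Perm α) = 0 := by
  simp only [invCount, card_eq_zero, eq_empty_iff_forall_notMem, mem_inversions, Perm.one_apply]
  exact fun _ h => lt_asymm h.1 h.2

lemma inversions_swap_mul_of_lt {a b : α} (hab : a ⋖ b) {π : Perm α} (h : π⁻¹ a < π⁻¹ b) :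
    inversions (swap a b * π) = insert (π⁻¹ a, π⁻¹ b) (inversions π) := by
  ext ⟨x, y⟩
  rw [Perm.inv_def] at h ⊢
  obtain ⟨u, rfl⟩ := π.symm.surjective x
  obtain ⟨v, rfl⟩ := π.symm.surjective y
  simp only [mem_inversions, mem_insert, Perm.mul_apply, Prod.mk.injEq, apply_symm_apply,
    π.symm.injective.eq_iff]
  by_cases hu : u = b ∧ v = a
  · obtain ⟨rfl, rfl⟩ := hu
    simp [hab.lt.ne', h.not_gt, hab.lt.not_gt]
  by_cases hu' : u = a ∧ v = b
  · obtain ⟨rfl, rfl⟩ := hu'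
    simp [h, hab.lt]
  rw [swap_lt_swap_iff_of_covBy hab (by tauto) (by tauto)]
  tauto

lemma invCount_swap_mul_of_lt {a b : α} (hab : a ⋖ b) {π : Perm α} (h : π⁻¹ a < π⁻¹ b) :
    invCount (swap a b * π) = invCount π + 1 := by
  rw [invCount, inversions_swap_mul_of_lt hab h, card_insert_of_notMem]
  · rfl
  · simp [hab.lt.le]

lemma invCount_swap_mul_le {a b : α} (hab : a ⋖ b) (π : Perm α) :
    invCount (swap a b * π) ≤ invCount π + 1 := by
  rcases lt_or_gt_of_ne (π⁻¹.injective.ne hab.lt.ne) with h | h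
  · exact (invCount_swap_mul_of_lt hab h).le
  · have h' : (swap a b * π)⁻¹ a < (swap a b * π)⁻¹ b := by simpa [Perm.inv_def] using h
    have := invCount_swap_mul_of_lt hab h'
    rw [← mul_assoc, swap_mul_self, one_mul] at this
    omega

end Inversions

section Words

variable {n : ℕ}

def adjSwap (i : Fin n) : Perm (Fin (n + 1)) := swap i.castSucc i.succ

lemma castSucc_covBy_succ (i : Fin n) : i.castSucc ⋖ i.succ :=
  Fin.covBy_iff.2 (by simp)

lemma adjSwap_apply_val (i : Fin n) (x : Fin (n + 1)) :
    (adjSwap i x : ℕ) =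
      if (x : ℕ) = i then (i : ℕ) + 1 else if (x : ℕ) = i + 1 then (i : ℕ) else x := by
  rcases eq_or_ne x i.castSucc with rfl | h
  · simp [adjSwap]
  rcases eq_or_ne x i.succ with rfl | h'
  · simp [adjSwap]
  rw [adjSwap, swap_apply_of_ne_of_ne h h', if_neg (fun e => h (Fin.ext (by simpa using e))),
    if_neg (fun e => h' (Fin.ext (by simpa using e)))]

def wordPerm (l : List (Fin n)) : Perm (Fin (n + 1)) := (l.map adjSwap).prod

noncomputable def wordBraid (l : List (Fin n)) : BraidGroup (n + 1) :=
  (l.map fun i => PresentedGroup.of i).prod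

@[simp] lemma wordPerm_nil : wordPerm ([] : List (Fin n)) = 1 := rfl

@[simp] lemma wordPerm_cons (i : Fin n) (l : List (Fin n)) :
    wordPerm (i :: l) = adjSwap i * wordPerm l := List.prod_cons

@[simp] lemma wordPerm_append (l l' : List (Fin n)) :
    wordPerm (l ++ l') = wordPerm l * wordPerm l' := by
  simp [wordPerm]

@[simp] lemma wordBraid_nil : wordBraid ([] : List (Fin n)) = 1 := rfl

@[simp] lemma wordBraid_cons (i : Fin n) (l : List (Fin n)) :
    wordBraid (i :: l) = PresentedGroup.of i * wordBraid l := List.prod_cons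

@[simp] lemma wordBraid_append (l l' : List (Fin n)) :
    wordBraid (l ++ l') = wordBraid l * wordBraid l' := by
  simp [wordBraid]

lemma invCount_wordPerm_le (l : List (Fin n)) : invCount (wordPerm l) ≤ l.length := by
  induction l with
  | nil => simp
  | cons i l ih =>
    rw [wordPerm_cons, List.length_cons]
    exact (invCount_swap_mul_le (castSucc_covBy_succ i) _).trans (by omega)

-- `chainWord n s j = [s+j-1, …, s]` (0-indexed letters) is the word of `σ_{s+j} ⋯ σ_{s+1}`;
-- the guard only makes the definition total.
def chainWord (n s : ℕ) : ℕ → List (Fin n)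
  | 0 => []
  | j + 1 => (if h : s + j < n then [⟨s + j, h⟩] else []) ++ chainWord n s j

lemma chainWord_succ {s j : ℕ} (h : s + j < n) :
    chainWord n s (j + 1) = ⟨s + j, h⟩ :: chainWord n s j := by
  simp [chainWord, h]

lemma length_chainWord {s j : ℕ} (h : s + j ≤ n) : (chainWord n s j).length = j := by
  induction j with
  | zero => rfl
  | succ j ih => simp [chainWord_succ (by omega : s + j < n), ih (by omega)]

lemma wordBraid_chainWord {s j : ℕ} (h : s + j ≤ n) :
    wordBraid (chainWord n s j) = sigChain (n + 1) (s + 1) j := by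
  induction j with
  | zero => rfl
  | succ j ih =>
    have hsig : sig (n + 1) (s + 1 + j) = PresentedGroup.of (⟨s + j, by omega⟩ : Fin n) := by
      rw [sig, dif_pos (by omega)]
      congr 2
      omega
    rw [chainWord_succ (by omega), wordBraid_cons, ih (by omega), sigChain, hsig]

lemma wordPerm_chainWord_apply_val {s j : ℕ} (h : s + j ≤ n) (x : Fin (n + 1)) :
    (wordPerm (chainWord n s j) x : ℕ) =
      if (x : ℕ) = s then s + j else if s < (x : ℕ) ∧ (x : ℕ) ≤ s + j then x - 1 else x := by
  induction j with
  | zero =>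
    simp only [chainWord, wordPerm_nil, Perm.one_apply]
    split_ifs <;> omega
  | succ j ih =>
    rw [chainWord_succ (by omega), wordPerm_cons, Perm.mul_apply, adjSwap_apply_val, ih (by omega)]
    have := x.isLt
    dsimp only
    split_ifs <;> omega

lemma wordPerm_chainWord_apply_of_lt {s j : ℕ} (h : s + j ≤ n) {x : Fin (n + 1)}
    (hx : (x : ℕ) < s) : wordPerm (chainWord n s j) x = x :=
  Fin.ext <| by rw [wordPerm_chainWord_apply_val h, if_neg (by omega), if_neg (by omega)]

lemma wordPerm_chainWord_apply_self {s j : ℕ} (h : s + j ≤ n) :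
    wordPerm (chainWord n s j) ⟨s, by omega⟩ = ⟨s + j, by omega⟩ :=
  Fin.ext <| by rw [wordPerm_chainWord_apply_val h, if_pos rfl]

end Words

section FixingBelow

def fixingBelow (m s : ℕ) : Finset (Perm (Fin m)) :=
  {π | ∀ x : Fin m, (x : ℕ) < s → π x = x}

variable {m s : ℕ}

@[simp]
lemma mem_fixingBelow {π : Perm (Fin m)} :
    π ∈ fixingBelow m s ↔ ∀ x : Fin m, (x : ℕ) < s → π x = x := by
  simp [fixingBelow]

@[simp]
lemma fixingBelow_zero : fixingBelow m 0 = univ := by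
  ext; simp

lemma fixingBelow_of_le (h : m ≤ s) : fixingBelow m s = {1} := by
  ext π
  simp only [mem_fixingBelow, mem_singleton]
  exact ⟨fun hπ => Perm.ext fun x => hπ x (by omega), fun hπ x _ => by simp [hπ]⟩

lemma inv_mem_fixingBelow {π : Perm (Fin m)} (hπ : π ∈ fixingBelow m s) :
    π⁻¹ ∈ fixingBelow m s :=
  mem_fixingBelow.2 fun x hx => Perm.inv_eq_iff_eq.2 (mem_fixingBelow.1 hπ x hx).symm

lemma le_apply_of_mem_fixingBelow {π : Perm (Fin m)} (hπ : π ∈ fixingBelow m s)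
    {x : Fin m} (hx : s ≤ x) : s ≤ π x := by
  by_contra! hlt
  have := π.injective (mem_fixingBelow.1 hπ _ hlt)
  omega

end FixingBelow

section Decomposition

variable {n s j : ℕ} {π' : Perm (Fin (n + 1))}

lemma wordPerm_chainWord_mul_mem (h : s + j ≤ n) (hπ' : π' ∈ fixingBelow (n + 1) (s + 1)) :
    wordPerm (chainWord n s j) * π' ∈ fixingBelow (n + 1) s := by
  rw [mem_fixingBelow]
  intro x hx
  rw [Perm.mul_apply, mem_fixingBelow.1 hπ' x (by omega), wordPerm_chainWord_apply_of_lt h hx]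

lemma wordPerm_chainWord_mul_apply_self (h : s + j ≤ n)
    (hπ' : π' ∈ fixingBelow (n + 1) (s + 1)) :
    (wordPerm (chainWord n s j) * π') ⟨s, by omega⟩ = ⟨s + j, by omega⟩ := by
  rw [Perm.mul_apply, mem_fixingBelow.1 hπ' _ (by simp), wordPerm_chainWord_apply_self h]

lemma image_wordPerm_chainWord_mul (hs : s ≤ n) :
    (range (n - s + 1) ×ˢ fixingBelow (n + 1) (s + 1)).image
        (fun p => wordPerm (chainWord n s p.1) * p.2) = fixingBelow (n + 1) s := by
  ext π
  simp only [mem_image, mem_product, mem_range, Prod.exists]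
  constructor
  · rintro ⟨j, π', ⟨hj, hπ'⟩, rfl⟩
    exact wordPerm_chainWord_mul_mem (by omega) hπ'
  · intro hπ
    set j := (π ⟨s, by omega⟩ : ℕ) - s
    have hs_le := le_apply_of_mem_fixingBelow hπ (x := ⟨s, by omega⟩) le_rfl
    have hj : s + j ≤ n := by omega
    refine ⟨j, (wordPerm (chainWord n s j))⁻¹ * π, ⟨by omega, ?_⟩, mul_inv_cancel_left _ _⟩
    rw [mem_fixingBelow]
    intro x hx
    rw [Perm.mul_apply, Perm.inv_eq_iff_eq]
    rcases Nat.lt_or_eq_of_le (Nat.le_of_lt_succ hx) with hx | hx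
    · rw [mem_fixingBelow.1 hπ x hx, wordPerm_chainWord_apply_of_lt hj hx]
    · rw [show x = ⟨s, by omega⟩ from Fin.ext hx, wordPerm_chainWord_apply_self hj]
      exact Fin.ext (by simp only; omega)

lemma injOn_wordPerm_chainWord_mul (hs : s ≤ n) :
    Set.InjOn (fun p : ℕ × Perm (Fin (n + 1)) => wordPerm (chainWord n s p.1) * p.2)
      (range (n - s + 1) ×ˢ fixingBelow (n + 1) (s + 1) : Finset _) := by
  rintro ⟨j, π'⟩ hp ⟨j', π''⟩ hp' he
  simp only [coe_product, Set.mem_prod, mem_coe, mem_range] at hp hp'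
  have hvals := congrArg (fun π : Perm (Fin (n + 1)) => (π ⟨s, by omega⟩ : ℕ)) he
  simp only [wordPerm_chainWord_mul_apply_self (by omega : s + j ≤ n) hp.2,
    wordPerm_chainWord_mul_apply_self (by omega : s + j' ≤ n) hp'.2] at hvals
  obtain rfl : j = j' := by omega
  exact Prod.ext rfl (mul_left_cancel he)

lemma invCount_wordPerm_chainWord_mul (h : s + j ≤ n) (hπ' : π' ∈ fixingBelow (n + 1) (s + 1)) :
    invCount (wordPerm (chainWord n s j) * π') = j + invCount π' := by
  induction j with
  | zero => simp [chainWord]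
  | succ j ih =>
    have hj : s + j < n := by omega
    set i : Fin n := ⟨s + j, hj⟩
    set τ := wordPerm (chainWord n s j) * π'
    have hτs : τ ⟨s, by omega⟩ = i.castSucc := wordPerm_chainWord_mul_apply_self hj.le hπ'
    have hτ : τ ∈ fixingBelow (n + 1) s := wordPerm_chainWord_mul_mem hj.le hπ'
    have hτs' : τ⁻¹ i.castSucc = ⟨s, by omega⟩ := Perm.inv_eq_iff_eq.2 hτs.symm
    have hle : s ≤ τ⁻¹ i.succ :=
      le_apply_of_mem_fixingBelow (inv_mem_fixingBelow hτ) (by simp [i]; omega)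
    have hne : τ⁻¹ i.succ ≠ τ⁻¹ i.castSucc := τ⁻¹.injective.ne Fin.castSucc_lt_succ.ne'
    have hlt : τ⁻¹ i.castSucc < τ⁻¹ i.succ := by
      rw [hτs'] at hne ⊢
      exact Fin.lt_def.2 (hle.lt_of_ne fun e => hne (Fin.ext e.symm))
    rw [chainWord_succ hj, wordPerm_cons, mul_assoc, adjSwap,
      invCount_swap_mul_of_lt (castSucc_covBy_succ i) hlt, ih hj.le]
    omega

lemma exists_word_length_eq_invCount (π : Perm (Fin (n + 1))) :
    ∃ l : List (Fin n), wordPerm l = π ∧ l.length = invCount π := by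
  suffices h : ∀ s ≤ n + 1, ∀ π ∈ fixingBelow (n + 1) s,
      ∃ l : List (Fin n), wordPerm l = π ∧ l.length = invCount π from
    h 0 (Nat.zero_le _) π (by simp)
  intro s hs
  induction hs using Nat.decreasingInduction with
  | self => exact fun π hπ => ⟨[], by simp_all [fixingBelow_of_le le_rfl]⟩
  | of_succ s hs ih =>
    intro π hπ
    rw [← image_wordPerm_chainWord_mul (by omega)] at hπ
    obtain ⟨⟨j, π'⟩, hmem, rfl⟩ := mem_image.1 hπ
    obtain ⟨hj, hπ'⟩ := mem_product.1 hmem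
    obtain ⟨l', rfl, hl'⟩ := ih π' hπ'
    refine ⟨chainWord n s j ++ l', wordPerm_append _ _, ?_⟩
    have hj : s + j ≤ n := by simp at hj; omega
    rw [List.length_append, length_chainWord hj, invCount_wordPerm_chainWord_mul hj hπ', hl']

end Decomposition

section Symmetriser

variable {n : ℕ} {t : Perm (Fin (n + 1)) → BraidGroup (n + 1)}
  (ht : ∀ l : List (Fin n), l.length = invCount (wordPerm l) → t (wordPerm l) = wordBraid l)

include ht

lemma apply_wordPerm_chainWord_mul {s j : ℕ} (h : s + j ≤ n) {π' : Perm (Fin (n + 1))}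
    (hπ' : π' ∈ fixingBelow (n + 1) (s + 1)) :
    t (wordPerm (chainWord n s j) * π') = sigChain (n + 1) (s + 1) j * t π' := by
  obtain ⟨l', rfl, hl'⟩ := exists_word_length_eq_invCount π'
  have hl : (chainWord n s j ++ l').length = invCount (wordPerm (chainWord n s j ++ l')) := by
    simp [length_chainWord h, invCount_wordPerm_chainWord_mul h hπ', hl']
  rw [← wordPerm_append, ht _ hl, ht l' hl', wordBraid_append, wordBraid_chainWord h]

lemma sum_fixingBelow_eq_bint_mul {s : ℕ} (hs : s ≤ n) :
    ∑ π ∈ fixingBelow (n + 1) s, MonoidAlgebra.of ℂ _ (t π) =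
      bint (n + 1) (s + 1) (n - s + 1) *
        ∑ π ∈ fixingBelow (n + 1) (s + 1), MonoidAlgebra.of ℂ _ (t π) := by
  rw [← image_wordPerm_chainWord_mul hs, sum_image (injOn_wordPerm_chainWord_mul hs),
    sum_product, bint, sum_mul_sum]
  refine sum_congr rfl fun j hj => sum_congr rfl fun π' hπ' => ?_
  rw [apply_wordPerm_chainWord_mul ht (by simp at hj; omega) hπ', map_mul]

lemma sum_fixingBelow_eq_bfact {s : ℕ} (hs : s ≤ n + 1) :
    ∑ π ∈ fixingBelow (n + 1) s, MonoidAlgebra.of ℂ _ (t π) =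
      bfact (n + 1) (s + 1) (n + 1 - s) := by
  induction hs using Nat.decreasingInduction with
  | self =>
    rw [fixingBelow_of_le le_rfl, sum_singleton, ← wordPerm_nil, ht [] (by simp), wordBraid_nil,
      map_one, Nat.sub_self, bfact]
  | of_succ s hs ih =>
    rw [sum_fixingBelow_eq_bint_mul ht (by omega), ih, show n + 1 - s = n - s + 1 by omega,
      show n + 1 - (s + 1) = n - s by omega, bfact]

end Symmetriser

end BraidedSymmetriser

open BraidedSymmetriser

/-- The braided symmetriser equals the sum over the Matsumoto
section: `Σ_{π ∈ 𝕊_n} t(π) = [n]!_σ` in `ℂ𝔹_n`, where `t(π) = σ_{i_1} ⋯ σ_{i_l}`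
for any reduced decomposition `π = s_{i_1} ⋯ s_{i_l}` of `π` into the Coxeter
generators `s_i = (i, i+1)` of `𝕊_n`. -/
theorem braided_symmetriser_eq_sum_matsumoto (n : ℕ)
    (t : Equiv.Perm (Fin (n + 1)) → BraidGroup (n + 1))
    (ht : ∀ (π : Equiv.Perm (Fin (n + 1))) (l : List (Fin n)),
      (l.map fun i => Equiv.swap (Fin.castSucc i) (Fin.succ i)).prod = π →
      (∀ l' : List (Fin n),
        (l'.map fun i => Equiv.swap (Fin.castSucc i) (Fin.succ i)).prod = π →
        l.length ≤ l'.length) →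
      t π = (l.map fun i => (PresentedGroup.of i : BraidGroup (n + 1))).prod) :
    ∑ π : Equiv.Perm (Fin (n + 1)), MonoidAlgebra.of ℂ (BraidGroup (n + 1)) (t π) =
      bfact (n + 1) 1 (n + 1) := by
  have hreduced : ∀ l : List (Fin n), l.length = invCount (wordPerm l) →
      t (wordPerm l) = wordBraid l := fun l hl =>
    ht _ l rfl fun l' hl' => by
      rw [hl, ← show wordPerm l' = wordPerm l from hl']
      exact invCount_wordPerm_le l'
  simpa using sum_fixingBelow_eq_bfact hreduced (Nat.zero_le _)
end

section
/- Let H be a graded braided Hopf algebra generated in degree 1, with H⁰ = ℂ, paired non-degenerately with a graded braided Hopf algebra H' generated in degree 1 via a graded Hopf pairing. If φ ∈ H satisfies D_v(φ) = 0 for every v ∈ (H')¹, where D_v(φ) = φ_{(1)}⟨φ_{(2)}, v⟩, then φ is a scalar (lies in H⁰). -/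
open TensorProduct

/-!
Pairing `φ` with a product `v * w`, `v` of degree one, gives `⟨D_v φ, w⟩ = 0`. Since `H'` is
generated in degree one, `⟨φ, ·⟩` vanishes in positive degrees, as does `⟨1, ·⟩` by gradedness.
Hence `⟨φ - c • 1, ·⟩` vanishes identically for `c = ⟨φ, 1⟩ / ⟨1, 1⟩`, and non-degeneracy
gives `φ = c • 1`; if `⟨1, 1⟩ = 0`, the same argument shows `1 = 0` in `H`.
-/

theorem LinearMap.eq_zero_of_map_eq_zero_of_positive_degrees {R A M : Type*} [CommSemiring R]
    [AddCommMonoid A] [Module R A] [AddCommMonoid M] [Module R M] {𝒜 : ℕ → Submodule R A}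
    (h𝒜 : DirectSum.IsInternal 𝒜)
    {e : A} (h0 : 𝒜 0 = Submodule.span R {e}) {f : A →ₗ[R] M} (he : f e = 0)
    (hpos : ∀ n, 𝒜 (n + 1) ≤ LinearMap.ker f) : f = 0 := by
  have hdeg : ∀ n, 𝒜 n ≤ LinearMap.ker f
    | 0 => h0 ▸ (Submodule.span_singleton_le_iff_mem _ _).mpr he
    | n + 1 => hpos n
  have htop : ⊤ ≤ LinearMap.ker f := h𝒜.submodule_iSup_eq_top ▸ iSup_le hdeg
  exact LinearMap.ker_eq_top.mp (top_le_iff.mp htop)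

theorem positive_degrees_le_ker_of_mul_mem_ker {R A M : Type*} [CommSemiring R] [Semiring A]
    [Module R A] [AddCommMonoid M] [Module R M] {𝒜 : ℕ → Submodule R A}
    (hgen : ∀ n : ℕ, 𝒜 (n + 1) ≤ Submodule.span R {z : A | ∃ v ∈ 𝒜 1, ∃ w ∈ 𝒜 n, z = v * w})
    {f : A →ₗ[R] M} (hf : ∀ v ∈ 𝒜 1, ∀ w, f (v * w) = 0) (n : ℕ) :
    𝒜 (n + 1) ≤ LinearMap.ker f :=
  (hgen n).trans <| Submodule.span_le.mpr fun _ ⟨v, hv, w, _, hz⟩ => hz ▸ hf v hv w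

theorem mul'_map_flip_eq_rid_map_flip {R H H' : Type*} [CommSemiring R] [AddCommMonoid H]
    [Module R H] [AddCommMonoid H'] [Module R H'] (P : H →ₗ[R] H' →ₗ[R] R) (v w : H')
    (t : H ⊗[R] H) :
    LinearMap.mul' R R (TensorProduct.map (P.flip w) (P.flip v) t) =
      P (TensorProduct.rid R H (TensorProduct.map LinearMap.id (P.flip v) t)) w := by
  induction t using TensorProduct.induction_on with
  | zero => simp
  | tmul a b => simp [mul_comm]
  | add x y hx hy => simp [hx, hy]

theorem derivatives_vanish_implies_constant_general
    {H : Type*} [Ring H] [Algebra ℂ H]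
    {H' : Type*} [Ring H'] [Algebra ℂ H']
    (ℬ : ℕ → Submodule ℂ H) (𝒜 : ℕ → Submodule ℂ H')
    (hdecH' : DirectSum.IsInternal 𝒜)
    -- `H⁰ = ℂ`
    (h0 : ℬ 0 = Submodule.span ℂ {(1 : H)})
    (h0' : 𝒜 0 = Submodule.span ℂ {(1 : H')})
    -- `H` and `H'` are generated by their degree-one components
    (hgenH' : ∀ n : ℕ, 𝒜 (n + 1) ≤ Submodule.span ℂ
      {z : H' | ∃ v ∈ 𝒜 1, ∃ w ∈ 𝒜 n, z = v * w})
    -- the coproduct of `H` and the duality pairing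
    (Δ : H →ₗ[ℂ] H ⊗[ℂ] H)
    (P : H →ₗ[ℂ] H' →ₗ[ℂ] ℂ)
    -- non-degeneracy of the pairing
    (hnondeg₁ : ∀ φ : H, (∀ x : H', P φ x = 0) → φ = 0)
    -- the pairing is graded: components of different degrees pair to zero
    (hgraded : ∀ m n : ℕ, m ≠ n → ∀ φ ∈ ℬ m, ∀ x ∈ 𝒜 n, P φ x = 0)
    -- Hopf pairing axiom `⟨φ, x y⟩ = ⟨φ₍₂₎, x⟩ ⟨φ₍₁₎, y⟩`
    (hhopf : ∀ (φ : H) (x y : H'),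
      P φ (x * y) =
        LinearMap.mul' ℂ ℂ (TensorProduct.map (P.flip y) (P.flip x) (Δ φ)))
    (φ : H)
    -- `D_v φ = φ₍₁₎ ⟨φ₍₂₎, v⟩ = 0` for all `v` of degree one in `H'`
    (hφ : ∀ v ∈ 𝒜 1,
      TensorProduct.rid ℂ H (TensorProduct.map LinearMap.id (P.flip v) (Δ φ)) = 0) :
    ∃ c : ℂ, φ = c • (1 : H) := by
  have hφpos : ∀ n, 𝒜 (n + 1) ≤ LinearMap.ker (P φ) :=
    positive_degrees_le_ker_of_mul_mem_ker hgenH' fun v hv w => by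
      rw [hhopf, mul'_map_flip_eq_rid_map_flip, hφ v hv, map_zero, LinearMap.zero_apply]
  have hone_pos : ∀ n, 𝒜 (n + 1) ≤ LinearMap.ker (P 1) := fun n x hx =>
    hgraded 0 (n + 1) (Nat.succ_ne_zero n).symm 1 (h0 ▸ Submodule.mem_span_singleton_self 1) x hx
  by_cases h11 : P 1 1 = 0
  · have hone : P 1 = 0 :=
      LinearMap.eq_zero_of_map_eq_zero_of_positive_degrees hdecH' h0' h11 hone_pos
    have : Subsingleton H := subsingleton_of_zero_eq_one <| Eq.symm <| hnondeg₁ 1 fun x => by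
      rw [hone, LinearMap.zero_apply]
    exact ⟨0, Subsingleton.elim _ _⟩
  · set c := P φ 1 / P 1 1
    have hpair : P (φ - c • 1) = 0 := by
      refine LinearMap.eq_zero_of_map_eq_zero_of_positive_degrees hdecH' h0' ?_ fun n x hx => ?_
      · simp [c, div_mul_cancel₀ _ h11]
      · simp [LinearMap.mem_ker.mp (hφpos n hx), LinearMap.mem_ker.mp (hone_pos n hx)]
    exact ⟨c, sub_eq_zero.mp <| hnondeg₁ _ fun x => by rw [hpair, LinearMap.zero_apply]⟩

/-- Let `H` be a graded braided Hopf algebra with `H⁰ = ℂ`,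
generated in degree 1, and non-degenerately paired via a graded Hopf pairing
`P = ⟨·,·⟩` with a graded braided Hopf algebra `H'` generated in degree 1
(the Hopf pairing axiom used is `⟨φ, xy⟩ = ⟨φ₍₂₎, x⟩⟨φ₍₁₎, y⟩`, components of
different degrees pair to zero).  If `φ ∈ H` satisfies `D_v φ = 0` for every
`v ∈ (H')¹`, where `D_v φ = φ₍₁₎ ⟨φ₍₂₎, v⟩`, then `φ` is a scalar (lies in
`H⁰ = ℂ·1`). -/
theorem derivatives_vanish_implies_constant
    {H : Type*} [Ring H] [Algebra ℂ H]
    {H' : Type*} [Ring H'] [Algebra ℂ H']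
    (ℬ : ℕ → Submodule ℂ H) (𝒜 : ℕ → Submodule ℂ H')
    (hdecH : DirectSum.IsInternal ℬ) (hdecH' : DirectSum.IsInternal 𝒜)
    -- `H⁰ = ℂ`
    (h0 : ℬ 0 = Submodule.span ℂ {(1 : H)})
    (h0' : 𝒜 0 = Submodule.span ℂ {(1 : H')})
    -- `H` and `H'` are generated by their degree-one components
    (hgenH : ∀ n : ℕ, ℬ (n + 1) ≤ Submodule.span ℂ
      {z : H | ∃ v ∈ ℬ 1, ∃ w ∈ ℬ n, z = v * w})
    (hgenH' : ∀ n : ℕ, 𝒜 (n + 1) ≤ Submodule.span ℂ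
      {z : H' | ∃ v ∈ 𝒜 1, ∃ w ∈ 𝒜 n, z = v * w})
    -- the coproduct of `H` and the duality pairing
    (Δ : H →ₗ[ℂ] H ⊗[ℂ] H)
    (P : H →ₗ[ℂ] H' →ₗ[ℂ] ℂ)
    -- non-degeneracy of the pairing
    (hnondeg₁ : ∀ φ : H, (∀ x : H', P φ x = 0) → φ = 0)
    (hnondeg₂ : ∀ x : H', (∀ φ : H, P φ x = 0) → x = 0)
    -- the pairing is graded: components of different degrees pair to zero
    (hgraded : ∀ m n : ℕ, m ≠ n → ∀ φ ∈ ℬ m, ∀ x ∈ 𝒜 n, P φ x = 0)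
    -- Hopf pairing axiom `⟨φ, x y⟩ = ⟨φ₍₂₎, x⟩ ⟨φ₍₁₎, y⟩`
    (hhopf : ∀ (φ : H) (x y : H'),
      P φ (x * y) =
        LinearMap.mul' ℂ ℂ (TensorProduct.map (P.flip y) (P.flip x) (Δ φ)))
    (φ : H)
    -- `D_v φ = φ₍₁₎ ⟨φ₍₂₎, v⟩ = 0` for all `v` of degree one in `H'`
    (hφ : ∀ v ∈ 𝒜 1,
      TensorProduct.rid ℂ H (TensorProduct.map LinearMap.id (P.flip v) (Δ φ)) = 0) :
    ∃ c : ℂ, φ = c • (1 : H) :=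
  derivatives_vanish_implies_constant_general ℬ 𝒜 hdecH' h0 h0' hgenH' Δ P hnondeg₁ hgraded hhopf φ
    hφ
end
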